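/- arXiv:0905.1322 — 2 statements merged into one kernel-verified Lean document; each statement's English description precedes it below -/
import Mathlib

section
/- Let Π = (p_1, p_2, …) be a sequence of pairwise distinct primes and let G be a torsion Π-graded group. Then every subgroup H of G of finite index contains δ_n^Π(G) for some n. -/
/-- The derived `Π`-series of a group, where `p i` denotes the prime `p_{i+1}` of the
sequence `Π = (p_1, p_2, …)`:  `δ_0^Π(G) = G` and
`δ_{i+1}^Π(G) = [δ_i^Π(G), δ_i^Π(G)] · (δ_i^Π(G))^{p_{i+1}}`, the subgroup generated by
all commutators and all `p_{i+1}`-th powers of elements of `δ_i^Π(G)`. -/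
def piDelta {G : Type*} [Group G] (p : ℕ → ℕ) : ℕ → Subgroup G
  | 0 => ⊤
  | i + 1 =>
      ⁅(piDelta p i : Subgroup G), (piDelta p i : Subgroup G)⁆ ⊔
        Subgroup.closure {x : G | ∃ a ∈ (piDelta p i : Subgroup G), a ^ p i = x}


lemma piDelta_succ_le {G : Type*} [Group G] (p : ℕ → ℕ) (i : ℕ) :
    (piDelta p (i + 1) : Subgroup G) ≤ piDelta p i := by
  rw [piDelta]
  apply sup_le
  · refine Subgroup.commutator_le.mpr fun g hg h hh => ?_
    exact mul_mem (mul_mem (mul_mem hg hh) (inv_mem hg)) (inv_mem hh)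
  · exact Subgroup.closure_le _ |>.mpr fun x ⟨a, ha, hax⟩ => hax ▸ pow_mem ha (p i)

lemma piDelta_antitone {G : Type*} [Group G] (p : ℕ → ℕ) : Antitone (piDelta p (G := G)) :=
  antitone_nat_of_succ_le (piDelta_succ_le p)

lemma pow_mem_piDelta_succ {G : Type*} [Group G] (p : ℕ → ℕ) {i : ℕ} {g : G}
    (hg : g ∈ piDelta p i) : g ^ p i ∈ piDelta p (i + 1) := by
  rw [piDelta]
  exact le_sup_right (b := Subgroup.closure _) (Subgroup.subset_closure ⟨g, hg, rfl⟩)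

lemma mem_piDelta_succ_of_coprime {G : Type*} [Group G] (p : ℕ → ℕ) {i : ℕ} {g : G}
    (hg : g ∈ piDelta p i) (hco : (p i).Coprime (orderOf g)) : g ∈ piDelta p (i + 1) := by
  obtain ⟨m, hm⟩ := exists_pow_eq_self_of_coprime hco
  rw [← hm, ← pow_mul, mul_comm, pow_mul]
  exact pow_mem_piDelta_succ p (pow_mem hg m)

lemma exists_bound_not_dvd (p : ℕ → ℕ) (hdist : Function.Injective p) {m : ℕ} (hm : m ≠ 0) :
    ∃ N : ℕ, ∀ j, N ≤ j → ¬ p j ∣ m := by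
  have hfin : (p ⁻¹' Set.Iic m).Finite :=
    (Set.finite_Iic m).preimage (Function.Injective.injOn hdist)
  obtain ⟨B, hB⟩ := hfin.bddAbove
  refine ⟨B + 1, fun j hj hd => ?_⟩
  have : p j ≤ m := Nat.le_of_dvd (Nat.pos_of_ne_zero hm) hd
  have := hB (Set.mem_preimage.mpr this)
  omega

lemma piDelta_exists_pow_prod_eq_one {G : Type*} [Group G] (p : ℕ → ℕ) (hp : ∀ i, (p i).Prime)
    (hdist : Function.Injective p) (htor : ∀ g : G, IsOfFinOrder g)
    (hgraded : (⨅ i : ℕ, (piDelta p (i + 1) : Subgroup G)) = ⊥)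
    {i : ℕ} {g : G} (hg : g ∈ piDelta p i) :
    ∃ i1, i ≤ i1 ∧ g ^ (∏ j ∈ Finset.Ico i i1, p j) = 1 := by
  have hm : orderOf g ≠ 0 := (htor g).orderOf_pos.ne'
  obtain ⟨N, hN⟩ := exists_bound_not_dvd p hdist hm
  set i1 := max i N with hi1
  refine ⟨i1, le_max_left _ _, ?_⟩
  set h := g ^ (∏ j ∈ Finset.Ico i i1, p j) with hh
  have claim1 : ∀ k, g ^ (∏ j ∈ Finset.Ico i (i + k), p j) ∈ piDelta p (i + k) := by
    intro k
    induction k with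
    | zero => simpa using hg
    | succ k ih =>
        rw [← add_assoc, Finset.prod_Ico_succ_top (Nat.le_add_right i k),
          pow_mul]
        exact pow_mem_piDelta_succ p ih
  have hh1 : h ∈ piDelta p i1 := by
    have := claim1 (i1 - i)
    rwa [Nat.add_sub_cancel' (le_max_left i N)] at this
  have hcop : ∀ j, i1 ≤ j → (p j).Coprime (orderOf h) := by
    intro j hj
    refine ((hp j).coprime_iff_not_dvd).mpr fun hd => ?_
    exact hN j (le_trans (le_max_right i N) hj) (hd.trans ((orderOf_pow_dvd _).trans dvd_rfl))
  have claim3 : ∀ k, h ∈ piDelta p (i1 + k) := by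
    intro k
    induction k with
    | zero => simpa using hh1
    | succ k ih =>
        rw [← add_assoc]
        exact mem_piDelta_succ_of_coprime p ih (hcop _ (Nat.le_add_right _ _))
  have hbot : h ∈ (⊥ : Subgroup G) := by
    rw [← hgraded]
    refine Subgroup.mem_iInf.mpr fun j => ?_
    exact piDelta_antitone p (by omega : j + 1 ≤ i1 + (j + 1)) (claim3 (j + 1))
  simpa [hh] using hbot

/-- **Corollary 2.5.** If `Π` consists of pairwise distinct primes and `G` is a torsion
`Π`-graded group, then every finite-index subgroup of `G` contains some `δ_n^Π(G)`. -/
theorem piDelta_le_of_finiteIndex_distinct_primes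
    {G : Type*} [Group G] (p : ℕ → ℕ) (hp : ∀ i, (p i).Prime)
    (hdist : Function.Injective p)
    (htor : ∀ g : G, IsOfFinOrder g)
    (hgraded : (⨅ i : ℕ, (piDelta p (i + 1) : Subgroup G)) = ⊥)
    (H : Subgroup G) (hH : H.FiniteIndex) :
    ∃ n : ℕ, (piDelta p n : Subgroup G) ≤ H := by
  set N := H.normalCore with hN
  haveI : H.FiniteIndex := hH
  haveI : N.FiniteIndex := Subgroup.finiteIndex_normalCore H
  have hidx : N.index ≠ 0 := Subgroup.FiniteIndex.index_ne_zero
  obtain ⟨n, hn⟩ := exists_bound_not_dvd p hdist hidx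
  refine ⟨n, fun g hg => ?_⟩
  obtain ⟨i1, hni1, hpow⟩ := piDelta_exists_pow_prod_eq_one p hp hdist htor hgraded hg
  have hk : (QuotientGroup.mk g : G ⧸ N) ^ (∏ j ∈ Finset.Ico n i1, p j) = 1 := by
    rw [← QuotientGroup.mk_pow, hpow, QuotientGroup.mk_one]
  have hd1 : orderOf (QuotientGroup.mk g : G ⧸ N) ∣ ∏ j ∈ Finset.Ico n i1, p j :=
    orderOf_dvd_of_pow_eq_one hk
  have hd2 : orderOf (QuotientGroup.mk g : G ⧸ N) ∣ N.index := by
    rw [Subgroup.index_eq_card]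
    exact orderOf_dvd_natCard _
  have hco : Nat.Coprime (∏ j ∈ Finset.Ico n i1, p j) N.index := by
    refine Nat.Coprime.prod_left fun j hj => ?_
    exact ((hp j).coprime_iff_not_dvd).mpr (hn j (Finset.mem_Ico.mp hj).1)
  have : orderOf (QuotientGroup.mk g : G ⧸ N) = 1 := by
    have := Nat.dvd_gcd hd1 hd2
    rwa [Nat.coprime_iff_gcd_eq_one.mp hco, Nat.dvd_one] at this
  have : (QuotientGroup.mk g : G ⧸ N) = 1 := orderOf_eq_one_iff.mp this
  exact H.normalCore_le ((QuotientGroup.eq_one_iff g).mp this)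
end

section
/- Let G be a finitely generated group, r ≥ 0 a real number, and (Q_n) a sequence of finite-index subgroups of G such that (i) every finite-index subgroup of G contains Q_n for some n, and (ii) d(Q_n) - 1 ≥ r·[G : Q_n] for every n. Then d(H) - 1 ≥ r·[G : H] for every finite-index subgroup H of G; in particular, G has rank gradient at least r. -/
/-!
Schreier's index formula `d(K) - 1 ≤ [H : K] (d(H) - 1)` for a finite-index `K ≤ H` finishes
the proof: choosing `Q n ≤ H`,
`[H : Q n] · r [G : H] = r [G : Q n] ≤ d(Q n) - 1 ≤ [H : Q n] (d(H) - 1)`.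
For the formula, grow a right transversal `R ∋ 1` of `K` in `H` one coset at a time along the
edges of the Schreier graph of a minimal generating set `S` of `H`. The `#R - 1` edges used
lie inside `R` and have trivial Schreier generators, so the remaining
`[H : K] · #S - ([H : K] - 1)` Schreier generators already generate `K`.
-/

/-- `minGens G` is `d(G)`, the minimal number of generators of the group `G`. -/
noncomputable def minGens (G : Type*) [Group G] : ℕ :=
  sInf {n : ℕ | ∃ S : Finset G, S.card = n ∧ Subgroup.closure (S : Set G) = ⊤}

open Subgroup Finset

lemma minGens_eq_rank (G : Type*) [Group G] [Group.FG G] : minGens G = Group.rank G := by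
  obtain ⟨S, hS, hS_top⟩ := Group.rank_spec G
  refine le_antisymm (Nat.sInf_le ⟨S, hS, hS_top⟩) (le_csInf ⟨_, S, hS, hS_top⟩ ?_)
  rintro _ ⟨T, rfl, hT⟩
  exact Group.rank_le hT

namespace Subgroup

variable {G : Type*} [Group G] (H : Subgroup G)

abbrev rightCosetMk : G → Quotient (QuotientGroup.rightRel H) := Quotient.mk''

variable {H}

lemma rightCosetMk_mul_right {a b : G} (hab : H.rightCosetMk a = H.rightCosetMk b) (s : G) :
    H.rightCosetMk (a * s) = H.rightCosetMk (b * s) := by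
  refine Quotient.sound' (QuotientGroup.rightRel_apply.mpr ?_)
  have := QuotientGroup.rightRel_apply.mp (Quotient.exact' hab)
  simpa [mul_assoc] using this

lemma card_le_index_of_injOn [H.FiniteIndex] {R : Finset G} (hR : Set.InjOn H.rightCosetMk R) :
    #R ≤ H.index := by
  have := Finite.of_equiv _ (QuotientGroup.quotientRightRelEquivQuotientLeftRel H).symm
  calc #R = (H.rightCosetMk '' R).ncard := by rw [hR.ncard_image, Set.ncard_coe_finset]
    _ ≤ Nat.card (Quotient (QuotientGroup.rightRel H)) := Set.ncard_le_card _
    _ = H.index := Nat.card_congr (QuotientGroup.quotientRightRelEquivQuotientLeftRel H)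

lemma isComplement_of_injOn_of_surjOn {R : Set G} (hinj : Set.InjOn H.rightCosetMk R)
    (hsurj : Set.SurjOn H.rightCosetMk R Set.univ) : IsComplement H R :=
  isComplement_subgroup_left_iff_bijective.mpr
    ⟨hinj.injective, fun q => by obtain ⟨g, hg, rfl⟩ := hsurj (Set.mem_univ q); exact ⟨⟨g, hg⟩, rfl⟩⟩

lemma exists_mul_notMem_image_of_not_surjOn {S R : Set G} (hS : closure S = ⊤)
    (hR1 : (1 : G) ∈ R) (hR : ¬ Set.SurjOn H.rightCosetMk R Set.univ) :
    ∃ a ∈ R, ∃ s ∈ S, H.rightCosetMk (a * s) ∉ H.rightCosetMk '' R ∨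
      H.rightCosetMk (a * s⁻¹) ∉ H.rightCosetMk '' R := by
  contrapose! hR
  rintro q -
  obtain ⟨g, rfl⟩ := Quotient.mk''_surjective q
  change H.rightCosetMk g ∈ _
  refine closure_induction_right (p := fun g _ => H.rightCosetMk g ∈ H.rightCosetMk '' R)
    ⟨1, hR1, rfl⟩ ?_ ?_ (hS ▸ mem_top g)
  · rintro g - s hs ⟨a, ha, hag⟩
    rw [← rightCosetMk_mul_right hag]
    exact (hR a ha s hs).1
  · rintro g - s hs ⟨a, ha, hag⟩
    rw [← rightCosetMk_mul_right hag]
    exact (hR a ha s hs).2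

lemma IsComplement.toRightFun_of_mem {R : Set G} (hR : IsComplement (H : Set G) R) {g : G}
    (hg : g ∈ R) : (hR.toRightFun g : G) = g := by
  have := (isComplement_iff_existsUnique_mul_inv_mem.mp hR g).unique
    (hR.mul_inv_toRightFun_mem g) (show g * ((⟨g, hg⟩ : R) : G)⁻¹ ∈ H by simp [H.one_mem])
  exact congrArg Subtype.val this

section DecidableEq

variable [DecidableEq G]

/-- The edges `a ⟶ a * s` of the Schreier graph that stay inside `R`; when `R` is a right
transversal containing `1`, their Schreier generators `a * s * (a * s)‾⁻¹` are trivial. -/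
def internalEdges (R S : Finset G) : Finset (G × G) := {p ∈ R ×ˢ S | p.1 * p.2 ∈ R}

lemma internalEdges_ssubset_insert {R S : Finset G} {x : G} (hx : x ∉ R) {p : G × G}
    (hp : p ∈ internalEdges (insert x R) S) (hpx : p.1 = x ∨ p.1 * p.2 = x) :
    internalEdges R S ⊂ internalEdges (insert x R) S := by
  refine Finset.ssubset_iff_of_subset (fun q hq => ?_) |>.mpr ⟨p, hp, fun hpR => ?_⟩
  · simp only [internalEdges, Finset.mem_filter, Finset.mem_product] at hq ⊢
    exact ⟨⟨Finset.mem_insert_of_mem hq.1.1, hq.1.2⟩, Finset.mem_insert_of_mem hq.2⟩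
  · simp only [internalEdges, Finset.mem_filter, Finset.mem_product] at hpR
    rcases hpx with rfl | hpx
    · exact hx hpR.1.1
    · exact hx (hpx ▸ hpR.2)

variable (H) in
/-- `R ∋ 1` represents distinct right cosets of `H` and is held together, in the Schreier graph
of `S`, by at least `#R - 1` internal edges. -/
structure IsSchreierTree (S R : Finset G) : Prop where
  one_mem : (1 : G) ∈ R
  injOn : Set.InjOn H.rightCosetMk R
  card_le : #R ≤ #(internalEdges R S) + 1

lemma IsSchreierTree.extend {S R : Finset G} (hR : IsSchreierTree H S R) {x : G}
    (hx : H.rightCosetMk x ∉ H.rightCosetMk '' R) {p : G × G}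
    (hp : p ∈ internalEdges (insert x R) S) (hpx : p.1 = x ∨ p.1 * p.2 = x) :
    IsSchreierTree H S (insert x R) := by
  have hxR : x ∉ R := fun h => hx ⟨x, h, rfl⟩
  refine ⟨Finset.mem_insert_of_mem hR.one_mem, ?_, ?_⟩
  · rw [Finset.coe_insert, Set.injOn_insert (by exact_mod_cast hxR)]
    exact ⟨hR.injOn, hx⟩
  · rw [Finset.card_insert_of_notMem hxR]
    have := Finset.card_lt_card (internalEdges_ssubset_insert hxR hp hpx)
    have := hR.card_le
    omega

lemma IsSchreierTree.exists_card_eq_succ {S R : Finset G} (hS : closure (S : Set G) = ⊤)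
    (hR : IsSchreierTree H S R) (hsurj : ¬ Set.SurjOn H.rightCosetMk R Set.univ) :
    ∃ R', IsSchreierTree H S R' ∧ #R' = #R + 1 := by
  obtain ⟨a, ha, s, hs, hnew | hnew⟩ := exists_mul_notMem_image_of_not_surjOn hS hR.one_mem hsurj
  · have hp : (a, s) ∈ internalEdges (insert (a * s) R) S := by
      simp [internalEdges, Finset.mem_coe.mp ha, Finset.mem_coe.mp hs]
    refine ⟨_, hR.extend hnew hp (Or.inr rfl), Finset.card_insert_of_notMem ?_⟩
    exact fun h => hnew ⟨_, h, rfl⟩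
  · have hp : (a * s⁻¹, s) ∈ internalEdges (insert (a * s⁻¹) R) S := by
      simp [internalEdges, Finset.mem_coe.mp ha, Finset.mem_coe.mp hs]
    refine ⟨_, hR.extend hnew hp (Or.inl rfl), Finset.card_insert_of_notMem ?_⟩
    exact fun h => hnew ⟨_, h, rfl⟩

variable (H) in
lemma exists_isComplement_isSchreierTree [H.FiniteIndex] {S : Finset G}
    (hS : closure (S : Set G) = ⊤) :
    ∃ R : Finset G, IsComplement (H : Set G) R ∧ IsSchreierTree H S R := by
  have grow : ∀ n, ∃ R, IsSchreierTree H S R ∧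
      (Set.SurjOn H.rightCosetMk R Set.univ ∨ n ≤ #R) := by
    intro n
    induction n with
    | zero => exact ⟨{1}, ⟨Finset.mem_singleton_self 1, by simp, by simp⟩, Or.inr (Nat.zero_le _)⟩
    | succ n ih =>
      obtain ⟨R, hR, hsurj | hn⟩ := ih
      · exact ⟨R, hR, Or.inl hsurj⟩
      by_cases hsurj : Set.SurjOn H.rightCosetMk R Set.univ
      · exact ⟨R, hR, Or.inl hsurj⟩
      obtain ⟨R', hR', hcard⟩ := hR.exists_card_eq_succ hS hsurj
      exact ⟨R', hR', Or.inr (by omega)⟩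
  obtain ⟨R, hR, hsurj | hcard⟩ := grow (H.index + 1)
  · exact ⟨R, isComplement_of_injOn_of_surjOn hR.injOn hsurj, hR⟩
  · have := card_le_index_of_injOn hR.injOn
    omega

end DecidableEq

lemma rank_add_index_le [Group.FG G] (H : Subgroup G) [H.FiniteIndex] :
    Group.rank H + H.index ≤ H.index * Group.rank G + 1 := by
  classical
  obtain ⟨S, hS_card, hS⟩ := Group.rank_spec G
  obtain ⟨R, hR, hRS⟩ := exists_isComplement_isSchreierTree H hS
  let f : G → H := fun g => ⟨g * (hR.toRightFun g : G)⁻¹, hR.mul_inv_toRightFun_mem g⟩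
  have hR_card : #R = H.index := by rw [← hR.ncard_right, Set.ncard_coe_finset]
  have hgen : closure ((((R ×ˢ S) \ internalEdges R S).image fun p => f (p.1 * p.2) :
      Finset H) : Set H) = ⊤ := by
    rw [eq_top_iff, ← closure_mul_image_eq_top' hR hRS.one_mem hS]
    refine (closure_mono fun x hx => ?_).trans (closure_insert_one _).le
    obtain ⟨_, hg, rfl⟩ := Finset.mem_image.mp hx
    obtain ⟨a, ha, s, hs, rfl⟩ := Finset.mem_mul.mp hg
    by_cases has : a * s ∈ R
    · refine Or.inl (Subtype.ext ?_)
      simp [hR.toRightFun_of_mem (Finset.mem_coe.mpr has)]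
    · refine Or.inr (Finset.mem_image.mpr ⟨(a, s), ?_, rfl⟩)
      simp [internalEdges, ha, hs, has]
  have hsub : internalEdges R S ⊆ R ×ˢ S := Finset.filter_subset _ _
  have hrank := (Group.rank_le hgen).trans Finset.card_image_le
  rw [Finset.card_sdiff_of_subset hsub, Finset.card_product, hR_card, hS_card] at hrank
  have hedges := Finset.card_le_card hsub
  rw [Finset.card_product, hR_card, hS_card] at hedges
  have := hRS.card_le
  rw [hR_card] at this
  omega

end Subgroup

lemma minGens_sub_one_le_relIndex_mul {G : Type*} [Group G] [Group.FG G] {K H : Subgroup G}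
    [K.FiniteIndex] (hKH : K ≤ H) :
    (minGens K : ℝ) - 1 ≤ K.relIndex H * ((minGens H : ℝ) - 1) := by
  have hH : H.FiniteIndex := finiteIndex_of_le hKH
  have hschreier := rank_add_index_le (K.subgroupOf H)
  rw [Group.rank_congr (subgroupOfEquivOfLe hKH), ← minGens_eq_rank, ← minGens_eq_rank] at hschreier
  have hschreier_real : (minGens K : ℝ) + K.relIndex H ≤ K.relIndex H * minGens H + 1 := by
    exact_mod_cast hschreier
  linarith

theorem rank_gradient_ge_of_cofinal_sequence_general
    {G : Type*} [Group G] (hFG : Group.FG G) (r : ℝ)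
    (Q : ℕ → Subgroup G) (hfi : ∀ n, (Q n).FiniteIndex)
    (hcof : ∀ H : Subgroup G, H.FiniteIndex → ∃ n, Q n ≤ H)
    (hrank : ∀ n, (minGens ↥(Q n) : ℝ) - 1 ≥ r * ((Q n).index : ℝ)) :
    ∀ H : Subgroup G, H.FiniteIndex → (minGens ↥H : ℝ) - 1 ≥ r * (H.index : ℝ) := by
  intro H hH
  obtain ⟨n, hn⟩ := hcof H hH
  have hrel : 0 < ((Q n).relIndex H : ℝ) := by
    exact_mod_cast Nat.pos_of_ne_zero (FiniteIndex.index_ne_zero (H := (Q n).subgroupOf H))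
  refine le_of_mul_le_mul_left ?_ hrel
  calc ((Q n).relIndex H : ℝ) * (r * H.index) = r * (Q n).index := by
        rw [← relIndex_mul_index hn]; push_cast; ring
    _ ≤ minGens (Q n) - 1 := hrank n
    _ ≤ (Q n).relIndex H * (minGens H - 1) := minGens_sub_one_le_relIndex_mul hn

/-- If `(Q n)` is a sequence of finite-index subgroups of a finitely generated group `G`
that is cofinal among finite-index subgroups and satisfies `d(Q n) - 1 ≥ r·[G : Q n]`,
then `d(H) - 1 ≥ r·[G : H]` for every finite-index subgroup `H ≤ G`. -/
theorem rank_gradient_ge_of_cofinal_sequence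
    {G : Type*} [Group G] (hFG : Group.FG G) (r : ℝ) (hr : 0 ≤ r)
    (Q : ℕ → Subgroup G) (hfi : ∀ n, (Q n).FiniteIndex)
    (hcof : ∀ H : Subgroup G, H.FiniteIndex → ∃ n, Q n ≤ H)
    (hrank : ∀ n, (minGens ↥(Q n) : ℝ) - 1 ≥ r * ((Q n).index : ℝ)) :
    ∀ H : Subgroup G, H.FiniteIndex → (minGens ↥H : ℝ) - 1 ≥ r * (H.index : ℝ) :=
  rank_gradient_ge_of_cofinal_sequence_general hFG r Q hfi hcof hrank
end
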